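/- Let ψ be a strictly plurisubharmonic function on an almost complex manifold (X, J) of real dimension 2n, i.e. −d(dψ ∘ J) tames J. Then every non-degenerate critical point of ψ has Morse index at most n. In particular, if ψ is an exhausting strictly plurisubharmonic Morse function on a Stein manifold of complex dimension n, all its critical points have index at most n. -/

import Mathlib

noncomputable section

open Set Function Filter Topology Metric MeasureTheory
open scoped Topology ENNReal Manifold

/-- Euclidean space `ℝ^N`. -/
abbrev E (N : ℕ) : Type := EuclideanSpace ℝ (Fin N)

section Core

variable {V : Type*} [NormedAddCommGroup V] [NormedSpace ℝ V]
variable {V' : Type*} [NormedAddCommGroup V'] [NormedSpace ℝ V']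

/-- The tangent space of a subset of a normed space at a point, defined as the linear span
of the tangent cone.  For a smooth embedded submanifold (possibly with boundary) this is the
usual tangent space. -/
def TanSp (M : Set V) (x : V) : Submodule ℝ V := Submodule.span ℝ (tangentConeAt ℝ M x)

/-- `M ⊆ V` is a smooth embedded `d`-dimensional submanifold (without boundary):
around every point it is parametrised by a smooth embedding of an open set of `ℝ^d`
with injective differential. -/
def IsSubmanifold (d : ℕ) (M : Set V) : Prop :=
  ∀ x ∈ M, ∃ (φ : E d → V) (ρ : V → E d) (O : Set (E d)) (U : Set V),
    IsOpen O ∧ IsOpen U ∧ x ∈ U ∧ ContDiffOn ℝ (⊤ : ℕ∞) φ O ∧ ContinuousOn ρ U ∧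
    (∀ y ∈ O, Function.Injective (fderiv ℝ φ y)) ∧ (∀ y ∈ O, ρ (φ y) = y) ∧
    φ '' O = M ∩ U

/-- `M ⊆ V` is a smooth embedded `(k+1)`-dimensional submanifold with boundary `Bd`:
around every point it is parametrised by a smooth embedding of a relatively open subset
of the half space `{y : ℝ × ℝ^k | 0 ≤ y.1}`. -/
def IsSubmanifoldWithBd (k : ℕ) (M Bd : Set V) : Prop :=
  Bd ⊆ M ∧ ∀ x ∈ M, ∃ (φ : ℝ × E k → V) (ρ : V → ℝ × E k) (O : Set (ℝ × E k)) (U : Set V),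
    IsOpen O ∧ IsOpen U ∧ x ∈ U ∧ ContDiffOn ℝ (⊤ : ℕ∞) φ O ∧ ContinuousOn ρ U ∧
    (∀ y ∈ O, Function.Injective (fderiv ℝ φ y)) ∧
    (∀ y ∈ O, 0 ≤ y.1 → ρ (φ y) = y) ∧
    φ '' (O ∩ {y | 0 ≤ y.1}) = M ∩ U ∧ φ '' (O ∩ {y | y.1 = 0}) = Bd ∩ U

/-- A differential 1-form on (an open subset of) `V`, written ambiently. -/
abbrev OneForm (V : Type*) [NormedAddCommGroup V] [NormedSpace ℝ V] := V → (V →L[ℝ] ℝ)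

/-- A differential 2-form on (an open subset of) `V`, written ambiently. -/
abbrev TwoForm (V : Type*) [NormedAddCommGroup V] [NormedSpace ℝ V] := V → (V →L[ℝ] V →L[ℝ] ℝ)

/-- Exterior derivative of a 1-form: `dα(u,v) = (D_u α)(v) - (D_v α)(u)`. -/
def extD (α : OneForm V) : TwoForm V := fun x => fderiv ℝ α x - (fderiv ℝ α x).flip

/-- Exterior derivative of a 2-form, evaluated on a triple of vectors. -/
def extD2 (ω : TwoForm V) (x u v w : V) : ℝ :=
  fderiv ℝ ω x u v w - fderiv ℝ ω x v u w + fderiv ℝ ω x w u v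

/-- Contraction (interior product) of a 2-form with a vector field. -/
def contrF (ω : TwoForm V) (Y : V → V) : OneForm V := fun x => ω x (Y x)

/-- `ω` is a symplectic form: smooth, skew and closed on the open neighbourhood `U`, and
nondegenerate on the tangent spaces of the submanifold `X ⊆ U`. -/
structure IsSymplecticOn (ω : TwoForm V) (U : Set V) (X : Set V) : Prop where
  smooth : ContDiffOn ℝ (⊤ : ℕ∞) ω U
  skew : ∀ x ∈ U, ∀ u v : V, ω x u v = - ω x v u
  closed : ∀ x ∈ U, ∀ u v w : V, extD2 ω x u v w = 0
  nondeg : ∀ x ∈ X, ∀ v ∈ TanSp X x, v ≠ 0 → ∃ w ∈ TanSp X x, ω x v w ≠ 0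

/-- `Y` is a Liouville vector field for `ω` along the manifold `X`, defined on `O`:
it is tangent to `X` and satisfies `L_Y ω = d(i_Y ω) = ω` on tangent vectors of `X`. -/
def IsLiouvilleField (ω : TwoForm V) (X : Set V) (Y : V → V) (O : Set V) : Prop :=
  ContDiffOn ℝ (⊤ : ℕ∞) Y O ∧ (∀ x ∈ X ∩ O, Y x ∈ TanSp X x) ∧
  ∀ x ∈ X ∩ O, ∀ u ∈ TanSp X x, ∀ v ∈ TanSp X x, extD (contrF ω Y) x u v = ω x u v

/-- `α` is a contact form on the (odd-dimensional) submanifold `M`: there is a Reeb vector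
in each tangent space, and `dα` is nondegenerate on the kernel of `α` in each tangent space.
This is equivalent to `α ∧ (dα)^(n-1)` being a volume form. -/
def IsContactForm (M : Set V) (α : OneForm V) : Prop :=
  (∃ U, IsOpen U ∧ M ⊆ U ∧ ContDiffOn ℝ (⊤ : ℕ∞) α U) ∧
  ∀ x ∈ M, (∃ r ∈ TanSp M x, α x r = 1 ∧ ∀ v ∈ TanSp M x, extD α x r v = 0) ∧
    ∀ v ∈ TanSp M x, α x v = 0 → v ≠ 0 → ∃ w ∈ TanSp M x, α x w = 0 ∧ extD α x v w ≠ 0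

/-- A (possibly multiply covered) closed Reeb orbit of period `T`:  a `T`-periodic curve
in `M` whose velocity is everywhere the Reeb vector of `α` (tangent to `M`, `α(γ') = 1`,
`dα(γ', ·) = 0` on `TM`). -/
def IsReebOrbit (M : Set V) (α : OneForm V) (T : ℝ) (γ : ℝ → V) : Prop :=
  0 < T ∧ (∀ t, γ t ∈ M) ∧ Function.Periodic γ T ∧
  ∀ t, ∃ v, HasDerivAt γ v t ∧ v ∈ TanSp M (γ t) ∧ α (γ t) v = 1 ∧
    ∀ w ∈ TanSp M (γ t), extD α (γ t) v w = 0

/-- The set of periods of closed Reeb orbits. -/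
def ReebPeriods (M : Set V) (α : OneForm V) : Set ℝ := {T | ∃ γ : ℝ → V, IsReebOrbit M α T γ}

/-- `inf(α)`:  the infimum of all positive periods of closed Reeb orbits (`∞` if none). -/
def minReebPeriod (M : Set V) (α : OneForm V) : ℝ≥0∞ := sInf (ENNReal.ofReal '' ReebPeriods M α)

/-- `β` defines the same (cooriented) contact structure as `α` on `M`, i.e. on `TM` it is a
positive function multiple of `α`. -/
def DefinesSameContactStructure (M : Set V) (α β : OneForm V) : Prop :=
  ∀ x ∈ M, ∃ c : ℝ, 0 < c ∧ ∀ v ∈ TanSp M x, β x v = c * α x v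

end Core

section Loops

/-- A (free) loop in a topological space, parametrised with period 1. -/
structure Loop (X : Type*) [TopologicalSpace X] : Type _ where
  toFun : ℝ → X
  continuous_toFun : Continuous toFun
  periodic_toFun : Function.Periodic toFun 1

/-- Free homotopy of loops. -/
def FreelyHomotopic {X : Type*} [TopologicalSpace X] (a b : Loop X) : Prop :=
  ∃ H : ℝ × ℝ → X, Continuous H ∧ (∀ t, H (0, t) = a.toFun t) ∧ (∀ t, H (1, t) = b.toFun t) ∧
    ∀ s, Function.Periodic (fun t => H (s, t)) 1

/-- `c` is a concatenation of the loops `a` and `b` (based at the common point `a(0)=b(0)`). -/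
def IsLoopConcat {X : Type*} [TopologicalSpace X] (a b c : Loop X) : Prop :=
  a.toFun 0 = b.toFun 0 ∧ (∀ t ∈ Icc (0:ℝ) (1/2), c.toFun t = a.toFun (2*t)) ∧
    ∀ t ∈ Icc (1/2 : ℝ) 1, c.toFun t = b.toFun (2*t - 1)

/-- The relators presenting the first integral singular homology in terms of loops:
constant loops, concatenation, and free homotopy. -/
def H1Relators (X : Type*) [TopologicalSpace X] : Set (FreeAbelianGroup (Loop X)) :=
  {z | ∃ a : Loop X, (∀ s t : ℝ, a.toFun s = a.toFun t) ∧ z = FreeAbelianGroup.of a} ∪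
  {z | ∃ a b c : Loop X, IsLoopConcat a b c ∧
        z = FreeAbelianGroup.of c - FreeAbelianGroup.of a - FreeAbelianGroup.of b} ∪
  {z | ∃ a b : Loop X, FreelyHomotopic a b ∧ z = FreeAbelianGroup.of a - FreeAbelianGroup.of b}

/-- A finite family of loops is null-homologous iff the sum of their classes vanishes in
`H₁(X;ℤ)`, i.e. the formal sum lies in the subgroup generated by the homology relators. -/
def NullHomologousFam {X : Type*} [TopologicalSpace X] {k : ℕ} (l : Fin k → Loop X) : Prop :=
  (∑ i, FreeAbelianGroup.of (l i)) ∈ AddSubgroup.closure (H1Relators X)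

/-- A loop is contractible iff it is freely homotopic to a constant loop. -/
def ContractibleLoop {X : Type*} [TopologicalSpace X] (a : Loop X) : Prop :=
  ∃ b : Loop X, (∀ s t : ℝ, b.toFun s = b.toFun t) ∧ FreelyHomotopic a b

variable {V : Type*} [NormedAddCommGroup V] [NormedSpace ℝ V]

/-- There is a null-homologous Reeb link for `(M,α)` of total action `< bound`:
finitely many (possibly multiply covered) closed Reeb orbits, the sum of whose
classes vanishes in `H₁(M;ℤ)` and the sum of whose periods is smaller than `bound`. -/
def HasNullReebLink (M : Set V) (α : OneForm V) (bound : ℝ≥0∞) : Prop :=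
  ∃ k : ℕ, 0 < k ∧ ∃ (γ : Fin k → ℝ → V) (T : Fin k → ℝ),
    (∀ i, IsReebOrbit M α (T i) (γ i)) ∧ ENNReal.ofReal (∑ i, T i) < bound ∧
    ∃ l : Fin k → Loop (↥M), (∀ i t, ((l i).toFun t : V) = γ i (T i * t)) ∧ NullHomologousFam l

/-- There is a closed Reeb orbit of period `< bound` which is contractible in `M`. -/
def HasContractibleReebOrbit (M : Set V) (α : OneForm V) (bound : ℝ≥0∞) : Prop :=
  ∃ (T : ℝ) (γ : ℝ → V), IsReebOrbit M α T γ ∧ ENNReal.ofReal T < bound ∧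
    ∃ l : Loop (↥M), (∀ t, (l.toFun t : V) = γ (T * t)) ∧ ContractibleLoop l

end Loops
section Stein

/-- Complex Euclidean space `ℂ^K`. -/
abbrev CE (K : ℕ) : Type := EuclideanSpace ℂ (Fin K)

/-- Multiplication by `i` on `ℂ^K`, as a real-linear map. -/
def mulI (K : ℕ) : CE K →L[ℝ] CE K := (Complex.I • ContinuousLinearMap.id ℂ (CE K)).restrictScalars ℝ

/-- `Vs ⊆ ℂ^K` is an embedded complex submanifold of complex dimension `n`. -/
def IsComplexSubmanifold (n : ℕ) {K : ℕ} (Vs : Set (CE K)) : Prop :=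
  ∀ x ∈ Vs, ∃ (φ : CE n → CE K) (ρ : CE K → CE n) (O : Set (CE n)) (U : Set (CE K)),
    IsOpen O ∧ IsOpen U ∧ x ∈ U ∧ DifferentiableOn ℂ φ O ∧ ContinuousOn ρ U ∧
    (∀ y ∈ O, Function.Injective (fderiv ℂ φ y)) ∧ (∀ y ∈ O, ρ (φ y) = y) ∧
    φ '' O = Vs ∩ U

/-- A Stein manifold of complex dimension `n`, realised (via a proper holomorphic embedding)
as a closed complex submanifold of some `ℂ^K`. -/
def IsSteinManifold (n : ℕ) {K : ℕ} (Vs : Set (CE K)) : Prop :=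
  IsClosed Vs ∧ Vs.Nonempty ∧ IsComplexSubmanifold n Vs

/-- The 1-form `-dψ ∘ J` on `ℂ^K` associated to a function `ψ`; its exterior derivative is
the form `ω_ψ = -d(dψ ∘ J)`. -/
def steinForm (K : ℕ) (ψ : CE K → ℝ) : OneForm (CE K) := fun x => -((fderiv ℝ ψ x).comp (mulI K))

/-- `ψ` is a smooth strictly plurisubharmonic function on (a neighbourhood of) `Vs`:
the form `ω_ψ = -d(dψ ∘ J)` tames the complex structure on the tangent spaces of `Vs`. -/
def IsStrictlyPSHOn (K : ℕ) (ψ : CE K → ℝ) (Vs : Set (CE K)) : Prop :=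
  (∃ U, IsOpen U ∧ Vs ⊆ U ∧ ContDiffOn ℝ (⊤ : ℕ∞) ψ U) ∧
  ∀ x ∈ Vs, ∀ v ∈ TanSp Vs x, v ≠ 0 → 0 < extD (steinForm K ψ) x v (mulI K v)

/-- `ψ` is exhausting on `Vs`: bounded below and proper. -/
def IsExhaustingOn (K : ℕ) (ψ : CE K → ℝ) (Vs : Set (CE K)) : Prop :=
  BddBelow (ψ '' Vs) ∧ ∀ r : ℝ, IsCompact {x ∈ Vs | ψ x ≤ r}

variable {V : Type*} [NormedAddCommGroup V] [NormedSpace ℝ V]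

/-- `B` is the intrinsic Hessian of `ψ|_{Vs}` at `x`: for every smooth curve `γ` in `Vs`
through `x` with velocity `v`, the second derivative of `ψ ∘ γ` at `0` equals `B(v,v)`.
(This determines `B` on the tangent space at a critical point.) -/
def IsIntrinsicHessianAt (Vs : Set V) (ψ : V → ℝ) (x : V) (B : V →ₗ[ℝ] V →ₗ[ℝ] ℝ) : Prop :=
  ∀ (v : V) (γ : ℝ → V), ContDiff ℝ (⊤ : ℕ∞) γ → (∀ᶠ t in 𝓝 (0:ℝ), γ t ∈ Vs) → γ 0 = x →
    HasDerivAt γ v 0 → iteratedDeriv 2 (ψ ∘ γ) 0 = B v v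

/-- `x` is a critical point of `ψ|_{Vs}`. -/
def IsCriticalOn (Vs : Set V) (ψ : V → ℝ) (x : V) : Prop :=
  x ∈ Vs ∧ ∀ v ∈ TanSp Vs x, fderiv ℝ ψ x v = 0

/-- `ψ|_{Vs}` is a Morse function: at every critical point the intrinsic Hessian exists and
is nondegenerate on the tangent space. -/
def IsMorseOn (Vs : Set V) (ψ : V → ℝ) : Prop :=
  ∀ x, IsCriticalOn Vs ψ x → ∃ B : V →ₗ[ℝ] V →ₗ[ℝ] ℝ, IsIntrinsicHessianAt Vs ψ x B ∧
    ∀ v ∈ TanSp Vs x, v ≠ 0 → ∃ w ∈ TanSp Vs x, B v w ≠ 0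

/-- The Morse index of `ψ|_{Vs}` at `x` is `< n`: every subspace of the tangent space on
which the intrinsic Hessian is negative definite has dimension `< n`. -/
def HessianIndexLt (Vs : Set V) (ψ : V → ℝ) (x : V) (n : ℕ) : Prop :=
  ∀ B : V →ₗ[ℝ] V →ₗ[ℝ] ℝ, IsIntrinsicHessianAt Vs ψ x B →
    ∀ L : Submodule ℝ V, L ≤ TanSp Vs x → (∀ v ∈ L, v ≠ 0 → B v v < 0) →
      Module.finrank ℝ L < n

/-- The Morse index of `ψ|_{Vs}` at `x` is `≤ n`. -/
def HessianIndexLe (Vs : Set V) (ψ : V → ℝ) (x : V) (n : ℕ) : Prop :=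
  ∀ B : V →ₗ[ℝ] V →ₗ[ℝ] ℝ, IsIntrinsicHessianAt Vs ψ x B →
    ∀ L : Submodule ℝ V, L ≤ TanSp Vs x → (∀ v ∈ L, v ≠ 0 → B v v < 0) →
      Module.finrank ℝ L ≤ n

/-- A witness of subcriticality for a Stein manifold `Vs` of complex dimension `n`:
an exhausting strictly plurisubharmonic Morse function all of whose critical points
have index `< n`. -/
def IsSubcriticalSteinPair (n : ℕ) {K : ℕ} (Vs : Set (CE K)) (ψ : CE K → ℝ) : Prop :=
  IsStrictlyPSHOn K ψ Vs ∧ IsExhaustingOn K ψ Vs ∧ IsMorseOn Vs ψ ∧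
  ∀ x, IsCriticalOn Vs ψ x → HessianIndexLt Vs ψ x n

end Stein

section AuxLemmas
set_option maxHeartbeats 1000000

open Function

/-- Linear-algebra bound: if a subspace `L` of `T` is negative for `Q`, `T` is invariant
under the injective map `J`, and `Q v + Q (J v) > 0` on `T`, then `2 dim L ≤ dim T`. -/
lemma aux_la {V : Type*} [NormedAddCommGroup V] [NormedSpace ℝ V] [FiniteDimensional ℝ V]
    (J : V →ₗ[ℝ] V) (hJinj : Injective J) (L T : Submodule ℝ V) (hLT : L ≤ T)
    (hJT : ∀ v ∈ T, J v ∈ T) (Q : V → ℝ) (hneg : ∀ v ∈ L, v ≠ 0 → Q v < 0)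
    (hpos : ∀ v ∈ T, v ≠ 0 → 0 < Q v + Q (J v)) (n : ℕ) (hT : Module.finrank ℝ T ≤ 2 * n) :
    Module.finrank ℝ L ≤ n := by
  set L' := L.map J with hL'
  have hdisj : L ⊓ L' = ⊥ := by
    rw [Submodule.eq_bot_iff]
    rintro v ⟨hvL, hvL'⟩
    by_contra hv0
    obtain ⟨w, hwL, rfl⟩ := hvL'
    have hw0 : w ≠ 0 := by rintro rfl; simp at hv0
    have h1 : Q w < 0 := hneg w hwL hw0
    have h2 : Q (J w) < 0 := hneg _ hvL hv0
    have h3 : 0 < Q w + Q (J w) := hpos w (hLT hwL) hw0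
    linarith
  have hrank : Module.finrank ℝ L' = Module.finrank ℝ L :=
    (Submodule.equivMapOfInjective J hJinj L).symm.finrank_eq
  have hsup : L ⊔ L' ≤ T := by
    refine sup_le hLT ?_
    rintro v ⟨w, hwL, rfl⟩
    exact hJT w (hLT hwL)
  have := Submodule.finrank_sup_add_finrank_inf_eq L L'
  rw [hdisj] at this
  simp only [finrank_bot, add_zero] at this
  have h4 : Module.finrank ℝ (L ⊔ L' : Submodule ℝ V) ≤ Module.finrank ℝ T :=
    Submodule.finrank_mono hsup
  omega

/-- The key pointwise computation: at a point where `dψ ∘ dJ` vanishes, the form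
`-d(dψ∘J)` evaluated on `(v, Jv)` is the sum of Hessian values at `v` and `Jv`. -/
lemma aux_extD {V : Type*} [NormedAddCommGroup V] [NormedSpace ℝ V]
    {Xo : Set V} (hXo : IsOpen Xo) {x₀ : V} (hx₀ : x₀ ∈ Xo)
    (J : V → V →L[ℝ] V) (ψ : V → ℝ)
    (hJ : ContDiffOn ℝ (⊤ : ℕ∞) J Xo) (hψ : ContDiffOn ℝ (⊤ : ℕ∞) ψ Xo)
    (hc : ∀ u : V, (fderiv ℝ ψ x₀).comp (fderiv ℝ J x₀ u) = 0) (v : V)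
    (hJJ : J x₀ (J x₀ v) = -v) :
    extD (fun y => -((fderiv ℝ ψ y).comp (J y))) x₀ v (J x₀ v)
      = fderiv ℝ (fun y => fderiv ℝ ψ y) x₀ v v
        + fderiv ℝ (fun y => fderiv ℝ ψ y) x₀ (J x₀ v) (J x₀ v) := by
  set H := fderiv ℝ (fun y => fderiv ℝ ψ y) x₀ with hH
  have hψat : ContDiffAt ℝ (⊤ : ℕ∞) ψ x₀ := hψ.contDiffAt (hXo.mem_nhds hx₀)
  have hF : DifferentiableAt ℝ (fun y => fderiv ℝ ψ y) x₀ := by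
    have : ContDiffAt ℝ 1 (fderiv ℝ ψ) x₀ := hψat.fderiv_right (WithTop.coe_le_coe.mpr le_top)
    exact this.differentiableAt one_ne_zero
  have hFd : HasFDerivAt (fun y => fderiv ℝ ψ y) H x₀ := hF.hasFDerivAt
  have hJd : HasFDerivAt J (fderiv ℝ J x₀) x₀ :=
    ((hJ.contDiffAt (hXo.mem_nhds hx₀)).differentiableAt (by simp)).hasFDerivAt
  have hα := (hFd.clm_comp hJd).neg
  have hfd : fderiv ℝ (fun y => -((fderiv ℝ ψ y).comp (J y))) x₀ = _ := hα.fderiv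
  have key : ∀ u w : V,
      fderiv ℝ (fun y => -((fderiv ℝ ψ y).comp (J y))) x₀ u w = -(H u (J x₀ w)) := by
    intro u w
    rw [hfd]
    simp [hc u, ContinuousLinearMap.comp_apply, ContinuousLinearMap.flip_apply]
  have h1 := key v (J x₀ v)
  have h2 := key (J x₀ v) v
  simp only [extD, ContinuousLinearMap.sub_apply, ContinuousLinearMap.flip_apply]
  rw [h1, h2, hJJ]
  simp

/-- The image of the differential of a local parametrisation lies in the tangent cone. -/
lemma aux_range_sub_cone {E' F : Type*} [NormedAddCommGroup E'] [NormedSpace ℝ E']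
    [NormedAddCommGroup F] [NormedSpace ℝ F]
    {φ : E' → F} {A : E' →L[ℝ] F} {O : Set E'} {s : Set F} {y₀ : E'}
    (hO : IsOpen O) (hy₀ : y₀ ∈ O) (hA : HasFDerivAt φ A y₀) (himg : φ '' O ⊆ s) :
    ∀ e : E', A e ∈ tangentConeAt ℝ s (φ y₀) := by
  intro e
  have h1 : tangentConeAt ℝ O y₀ = univ := by
    rw [tangentConeAt_congr (by rw [nhdsWithin_univ, nhdsWithin_eq_nhds.2 (hO.mem_nhds hy₀)])]
    exact tangentConeAt_univ
  have h2 : MapsTo A (tangentConeAt ℝ O y₀) (tangentConeAt ℝ (φ '' O) (φ y₀)) :=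
    (hA.hasFDerivWithinAt (s := O)).mapsTo_tangent_cone
  exact tangentConeAt_mono himg (h2 (by rw [h1]; trivial))

/-- Conversely, the tangent cone of a locally parametrised set is contained in the
range of the differential of the parametrisation. -/
lemma aux_cone_sub_range {E' F : Type*} [NormedAddCommGroup E'] [NormedSpace ℝ E']
    [NormedAddCommGroup F] [NormedSpace ℝ F] [FiniteDimensional ℝ E'] [FiniteDimensional ℝ F]
    {φ : E' → F} {ρ : F → E'} {A : E' →L[ℝ] F} {O : Set E'} {U : Set F} {s : Set F} {y₀ : E'}
    (hO : IsOpen O) (hU : IsOpen U) (hy₀ : y₀ ∈ O) (hxU : φ y₀ ∈ U)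
    (hA : HasFDerivAt φ A y₀) (hAinj : Injective A)
    (hρ : ContinuousOn ρ U) (hρφ : ∀ y ∈ O, ρ (φ y) = y) (himg : φ '' O = s ∩ U) :
    tangentConeAt ℝ s (φ y₀) ⊆ Set.range A := by
  set x := φ y₀ with hx
  intro v hv
  obtain ⟨c, d, hd0, hd, hcd⟩ := mem_tangentConeAt_iff_exists_seq.mp hv
  have hxdx : Tendsto (fun n => x + d n) atTop (𝓝 x) := by
    simpa using tendsto_const_nhds.add hd0
  have hev : ∀ᶠ n in atTop, x + d n ∈ φ '' O := by
    filter_upwards [hd, hxdx (hU.mem_nhds hxU)] with n h1 h2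
    rw [himg]; exact ⟨h1, h2⟩
  set z : ℕ → E' := fun n => ρ (x + d n) with hz
  have hzO : ∀ᶠ n in atTop, z n ∈ O ∧ φ (z n) = x + d n := by
    filter_upwards [hev] with n hn
    obtain ⟨w, hwO, hw⟩ := hn
    have : z n = w := by rw [hz]; simp only [← hw, hρφ w hwO]
    exact this ▸ ⟨hwO, hw⟩
  have hztend : Tendsto z atTop (𝓝 y₀) := by
    have h2 : Tendsto (fun n => ρ (x + d n)) atTop (𝓝 (ρ x)) :=
      (hρ.continuousAt (hU.mem_nhds hxU)).tendsto.comp hxdx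
    rwa [hx, hρφ y₀ hy₀] at h2
  set e : ℕ → E' := fun n => z n - y₀ with he
  have hdn : ∀ᶠ n in atTop, φ (z n) - x = d n := by
    filter_upwards [hzO] with n hn; rw [hn.2]; abel
  obtain ⟨K, hKpos, hKa⟩ := (A : E' →ₗ[ℝ] F).injective_iff_antilipschitz.mp hAinj
  set Kr := (K : ℝ) with hKrdef
  have hKr : 0 < Kr := hKpos
  have hetend : Tendsto e atTop (𝓝 0) := by
    simpa using hztend.sub (tendsto_const_nhds (x := y₀))
  have hro : (fun n => φ (z n) - x - A (e n)) =o[Filter.atTop] e := by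
    have h' := (hasFDerivAt_iff_isLittleO_nhds_zero.mp hA).comp_tendsto hetend
    refine h'.congr' ?_ ?_ <;> filter_upwards with n <;> simp [he, hx, Function.comp]
  obtain ⟨M₀, hM₀⟩ : ∃ M₀, ∀ᶠ n in atTop, ‖c n • d n‖ ≤ M₀ :=
    ⟨‖v‖ + 1, hcd.norm.eventually (eventually_le_nhds (by linarith [norm_nonneg v]))⟩
  have hM₀0 : 0 ≤ M₀ := by
    by_contra h
    obtain ⟨n, hn⟩ := hM₀.exists
    nlinarith [norm_nonneg (c n • d n)]
  have hbdd : ∀ᶠ n in atTop, ‖c n‖ * ‖e n‖ ≤ 2 * Kr * M₀ + 1 := by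
    have hsmall := hro.def (c := (2 * Kr)⁻¹) (by positivity)
    filter_upwards [hsmall, hdn, hM₀] with n h1 h2 h3
    have h4 : ‖e n‖ ≤ Kr * ‖A (e n)‖ := by
      have := hKa.le_mul_dist (e n) 0
      simpa [dist_eq_norm, hKrdef] using this
    have h5 : ‖A (e n)‖ ≤ ‖d n‖ + (2*Kr)⁻¹ * ‖e n‖ := by
      have h' : φ (z n) - x - (φ (z n) - x - A (e n)) = A (e n) := by abel
      calc ‖A (e n)‖ = ‖φ (z n) - x - (φ (z n) - x - A (e n))‖ := by rw [h']
        _ ≤ ‖φ (z n) - x‖ + ‖φ (z n) - x - A (e n)‖ := norm_sub_le _ _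
        _ ≤ ‖d n‖ + (2*Kr)⁻¹ * ‖e n‖ := by rw [h2] at h1 ⊢; linarith
    have h6 : ‖e n‖ ≤ Kr * ‖d n‖ + Kr * ((2*Kr)⁻¹ * ‖e n‖) := by
      calc ‖e n‖ ≤ Kr * ‖A (e n)‖ := h4
        _ ≤ Kr * (‖d n‖ + (2*Kr)⁻¹ * ‖e n‖) := mul_le_mul_of_nonneg_left h5 hKr.le
        _ = Kr * ‖d n‖ + Kr * ((2*Kr)⁻¹ * ‖e n‖) := by ring
    have h7 : Kr * ((2*Kr)⁻¹ * ‖e n‖) = ‖e n‖ / 2 := by field_simp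
    rw [h7] at h6
    have h8 : ‖e n‖ ≤ 2 * Kr * ‖d n‖ := by linarith
    calc ‖c n‖ * ‖e n‖ ≤ ‖c n‖ * (2 * Kr * ‖d n‖) :=
          mul_le_mul_of_nonneg_left h8 (norm_nonneg _)
      _ = 2 * Kr * ‖c n • d n‖ := by rw [norm_smul]; ring
      _ ≤ 2 * Kr * M₀ := by nlinarith
      _ ≤ 2 * Kr * M₀ + 1 := by linarith
  have hrem : Tendsto (fun n => c n • (φ (z n) - x - A (e n))) atTop (𝓝 0) := by
    rw [NormedAddCommGroup.tendsto_nhds_zero]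
    intro ε hε
    set M := 2 * Kr * M₀ + 1 with hM
    have hMpos : 0 < M := by positivity
    have hsmall := hro.def (c := ε / (2 * M)) (by positivity)
    filter_upwards [hsmall, hbdd] with n h1 h2
    have : ‖c n • (φ (z n) - x - A (e n))‖ = ‖c n‖ * ‖φ (z n) - x - A (e n)‖ := norm_smul _ _
    rw [this]
    calc ‖c n‖ * ‖φ (z n) - x - A (e n)‖ ≤ ‖c n‖ * (ε / (2*M) * ‖e n‖) :=
          mul_le_mul_of_nonneg_left h1 (norm_nonneg _)
      _ = ε / (2*M) * (‖c n‖ * ‖e n‖) := by ring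
      _ ≤ ε / (2*M) * M := mul_le_mul_of_nonneg_left h2 (by positivity)
      _ = ε / 2 := by field_simp
      _ < ε := by linarith
  have htend : Tendsto (fun n => A (c n • e n)) atTop (𝓝 v) := by
    have heq : ∀ᶠ n in atTop, A (c n • e n) = c n • d n - c n • (φ (z n) - x - A (e n)) := by
      filter_upwards [hdn] with n hn
      rw [_root_.map_smul, ← hn]
      module
    have h9 := hcd.sub hrem
    rw [sub_zero] at h9
    exact Tendsto.congr' (heq.mono fun n h => h.symm) h9
  have hclosed : IsClosed (Set.range (A : E' → F)) := by
    have : Set.range (A : E' → F) = (LinearMap.range (A : E' →ₗ[ℝ] F) : Submodule ℝ F) := by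
      ext w; simp [LinearMap.mem_range]
    rw [this]
    exact Submodule.closed_of_finiteDimensional _
  have hmem : v ∈ closure (Set.range (A : E' → F)) :=
    mem_closure_of_tendsto htend (Eventually.of_forall fun n => ⟨c n • e n, rfl⟩)
  rwa [hclosed.closure_eq] at hmem

section theta
/-- An analytic, globally bounded reparametrisation of `ℝ` with
`θ 0 = 0`, `θ' 0 = 1`, `θ'' 0 = 0`. -/
def θf (δ t : ℝ) : ℝ := t / (1 + (t/δ)^2)
/-- Derivative of `θf`. -/
def θf1 (δ t : ℝ) : ℝ :=
  (1 * (1 + (t/δ)^2) - t * (2*(t/δ)*δ⁻¹)) / ((1 + (t/δ)^2)^2)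
lemma θf_den_pos (δ t : ℝ) : 0 < 1 + (t/δ)^2 := by positivity
lemma hdiv_hasDeriv (δ t : ℝ) : HasDerivAt (fun s : ℝ => s/δ) δ⁻¹ t := by
  simpa [div_eq_mul_inv] using (hasDerivAt_id t).mul_const δ⁻¹
lemma θf_den_hasDeriv (δ t : ℝ) :
    HasDerivAt (fun s : ℝ => 1 + (s/δ)^2) (2*(t/δ)*δ⁻¹) t := by
  have h2 := (((hdiv_hasDeriv δ t).pow 2).const_add 1)
  have h3 : ((2:ℕ):ℝ) * (t/δ)^(2-1) * δ⁻¹ = 2*(t/δ)*δ⁻¹ := by norm_num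
  rwa [h3] at h2
lemma θf_hasDeriv (δ : ℝ) (t : ℝ) : HasDerivAt (θf δ) (θf1 δ t) t :=
  (hasDerivAt_id t).div (θf_den_hasDeriv δ t) (θf_den_pos δ t).ne'
lemma θf_zero (δ : ℝ) : θf δ 0 = 0 := by simp [θf]
lemma θf1_zero (δ : ℝ) : θf1 δ 0 = 1 := by simp [θf1]
lemma θf1_hasDeriv_zero (δ : ℝ) : HasDerivAt (θf1 δ) 0 0 := by
  have hnum : HasDerivAt (fun t : ℝ => 1 * (1 + (t/δ)^2) - t * (2*(t/δ)*δ⁻¹)) 0 0 := by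
    have ha : HasDerivAt (fun t : ℝ => 1 * (1 + (t/δ)^2)) 0 0 := by
      simpa using (θf_den_hasDeriv δ 0).const_mul 1
    have hc : HasDerivAt (fun t : ℝ => 2*(t/δ)*δ⁻¹) (2*δ⁻¹*δ⁻¹) 0 :=
      ((hdiv_hasDeriv δ 0).const_mul 2).mul_const δ⁻¹
    have hb : HasDerivAt (fun t : ℝ => t * (2*(t/δ)*δ⁻¹)) 0 0 := by
      exact ((hasDerivAt_id (0:ℝ)).mul hc).congr_deriv (by simp)
    exact (ha.sub hb).congr_deriv (by simp)
  have hd2 : HasDerivAt (fun t : ℝ => (1 + (t/δ)^2)^2) 0 0 := by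
    exact ((θf_den_hasDeriv δ 0).pow 2).congr_deriv (by simp)
  have := hnum.div hd2 (by positivity : (0:ℝ) < (1 + ((0:ℝ)/δ)^2)^2).ne'
  exact this.congr_deriv (by norm_num)
lemma θf_bound {δ : ℝ} (hδ : 0 < δ) (t : ℝ) : |θf δ t| ≤ δ/2 := by
  have hD := θf_den_pos δ t
  rw [θf, abs_div, abs_of_pos hD, div_le_iff₀ hD]
  have h2 : δ/2 * (1+(t/δ)^2) = (δ^2 + t^2)/(2*δ) := by field_simp
  rw [h2, le_div_iff₀ (by positivity)]
  nlinarith [sq_nonneg (δ - |t|), sq_abs t, abs_nonneg t]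
lemma θf_analyticAt {δ : ℝ} (hδ : δ ≠ 0) (t : ℝ) : AnalyticAt ℝ (θf δ) t := by
  have hden : AnalyticAt ℝ (fun s : ℝ => 1 + (s/δ)^2) t :=
    analyticAt_const.add ((analyticAt_id.div analyticAt_const (by simpa using hδ)).pow 2)
  exact analyticAt_id.div hden (θf_den_pos δ t).ne'
end theta

/-- The intrinsic-Hessian computation along a holomorphic disc in the direction `a • u`. -/
lemma aux_curve {n K : ℕ} {Vs : Set (CE K)} {ψ : CE K → ℝ} {Uψ : Set (CE K)}
    (hUψ : IsOpen Uψ) (hVsU : Vs ⊆ Uψ) (hψ : ContDiffOn ℝ (⊤ : ℕ∞) ψ Uψ)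
    {φ : CE n → CE K} {O : Set (CE n)} (hO : IsOpen O) {y₀ : CE n} (hy₀ : y₀ ∈ O)
    (hφ : DifferentiableOn ℂ φ O) (himg : ∀ y ∈ O, φ y ∈ Vs)
    {x : CE K} (hx : φ y₀ = x)
    (B : CE K →ₗ[ℝ] CE K →ₗ[ℝ] ℝ) (hB : IsIntrinsicHessianAt Vs ψ x B)
    (u : CE n) (a : ℂ) (ha : ‖a‖ = 1) :
    B (a • (fderiv ℂ φ y₀ u)) (a • (fderiv ℂ φ y₀ u))
      = fderiv ℝ (fun y => fderiv ℝ ψ y) x (a • (fderiv ℂ φ y₀ u)) (a • (fderiv ℂ φ y₀ u))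
        + fderiv ℝ ψ x ((a*a) • deriv (deriv (fun τ : ℂ => φ (y₀ + τ • u))) 0) := by
  set P : ℂ → CE K := fun τ => φ (y₀ + τ • u) with hPdef
  set D : Set ℂ := {τ | y₀ + τ • u ∈ O} with hDdef
  have hD : IsOpen D := hO.preimage (by continuity)
  have h0D : (0:ℂ) ∈ D := by simp [hDdef, hy₀]
  have hℓd : ∀ τ : ℂ, HasDerivAt (fun τ : ℂ => y₀ + τ • u) u τ := fun τ => by
    simpa using ((hasDerivAt_id τ).smul_const u).const_add y₀
  have hℓdiff : Differentiable ℂ (fun τ : ℂ => y₀ + τ • u) := fun τ => (hℓd τ).differentiableAt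
  have hPD : DifferentiableOn ℂ P D :=
    hφ.comp hℓdiff.differentiableOn (fun τ hτ => hτ)
  have hPan : AnalyticOnNhd ℂ P D := hPD.analyticOnNhd hD
  have hQan : AnalyticOnNhd ℂ (deriv P) D := hPan.deriv
  have hφy₀ : DifferentiableAt ℂ φ y₀ := hφ.differentiableAt (hO.mem_nhds hy₀)
  have hy₀' : y₀ + (0:ℂ) • u = y₀ := by simp
  have hP0 : HasDerivAt P (fderiv ℂ φ y₀ u) 0 := by
    have hφd : HasFDerivAt φ (fderiv ℂ φ y₀) (y₀ + (0:ℂ) • u) := by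
      rw [hy₀']; exact hφy₀.hasFDerivAt
    exact hφd.comp_hasDerivAt 0 (hℓd 0)
  have hQ0 : deriv P 0 = fderiv ℂ φ y₀ u := hP0.deriv
  set v₀ : CE K := fderiv ℂ φ y₀ u with hv₀
  obtain ⟨r, hr, hball⟩ := Metric.isOpen_iff.mp hO y₀ hy₀
  set δ : ℝ := r / (‖u‖ + 1) with hδdef
  have hδ : 0 < δ := by positivity
  set η : ℝ → ℂ := fun t => ((θf δ t : ℝ) : ℂ) * a with hηdef
  have hηD : ∀ t : ℝ, η t ∈ D := by
    intro t
    apply hball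
    simp only [Metric.mem_ball, dist_eq_norm]
    have : y₀ + η t • u - y₀ = η t • u := by abel
    rw [this, norm_smul]
    have h1 : ‖η t‖ = |θf δ t| := by
      rw [hηdef]; simp [norm_mul, ha, Complex.norm_real, Real.norm_eq_abs]
    rw [h1]
    calc |θf δ t| * ‖u‖ ≤ (δ/2) * ‖u‖ :=
          mul_le_mul_of_nonneg_right (θf_bound hδ t) (norm_nonneg u)
      _ < r := by
          rw [hδdef, div_div, div_mul_eq_mul_div, div_lt_iff₀ (by positivity)]
          nlinarith [norm_nonneg u]
  set γ : ℝ → CE K := fun t => P (η t) with hγdef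
  have hγVs : ∀ t, γ t ∈ Vs := fun t => himg _ (hηD t)
  have hη0 : η 0 = 0 := by simp [hηdef, θf_zero]
  have hγ0 : γ 0 = x := by rw [hγdef]; simp only [hη0]; simpa [hPdef] using hx
  have hηd : ∀ t : ℝ, HasDerivAt η (((θf1 δ t : ℝ) : ℂ) * a) t := fun t =>
    ((θf_hasDeriv δ t).ofReal_comp).mul_const a
  have hγd : ∀ t : ℝ, HasDerivAt γ ((((θf1 δ t : ℝ):ℂ) * a) • deriv P (η t)) t := by
    intro t
    have hPdiff : HasDerivAt P (deriv P (η t)) (η t) :=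
      ((hPan _ (hηD t)).differentiableAt).hasDerivAt
    exact HasDerivAt.scomp t hPdiff (hηd t)
  have hγv : HasDerivAt γ (a • v₀) 0 := by
    have := hγd 0
    rw [hη0, hQ0, θf1_zero] at this
    simpa using this
  have hγsmooth : ContDiff ℝ (⊤ : ℕ∞) γ := by
    rw [contDiff_iff_contDiffAt]
    intro t
    have hP : ContDiffAt ℝ (⊤ : ℕ∞) P (η t) := ((hPan _ (hηD t)).restrictScalars).contDiffAt
    have hηc : ContDiffAt ℝ (⊤ : ℕ∞) η t := by
      have h1 : AnalyticAt ℝ (fun t : ℝ => ((θf δ t : ℝ) : ℂ)) t :=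
        (Complex.ofRealCLM.analyticAt _).comp (θf_analyticAt hδ.ne' t)
      exact (h1.mul analyticAt_const).contDiffAt
    exact hP.comp t hηc
  have hBval : iteratedDeriv 2 (ψ ∘ γ) 0 = B (a • v₀) (a • v₀) :=
    hB (a • v₀) γ hγsmooth (Eventually.of_forall hγVs) hγ0 hγv
  have hψx : x ∈ Uψ := hVsU (hγ0 ▸ hγVs 0)
  have hψat : ContDiffAt ℝ (⊤ : ℕ∞) ψ x := hψ.contDiffAt (hUψ.mem_nhds hψx)
  set Hψ := fderiv ℝ (fun y => fderiv ℝ ψ y) x with hHψ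
  have hFd : HasFDerivAt (fun y => fderiv ℝ ψ y) Hψ x := by
    have : ContDiffAt ℝ 1 (fderiv ℝ ψ) x := hψat.fderiv_right (WithTop.coe_le_coe.mpr le_top)
    exact (this.differentiableAt one_ne_zero).hasFDerivAt
  set G : ℝ → ℝ := fun t => (fderiv ℝ ψ (γ t)) ((((θf1 δ t : ℝ):ℂ) * a) • deriv P (η t))
    with hGdef
  have hψγ : ∀ t : ℝ, HasDerivAt (ψ ∘ γ) (G t) t := by
    intro t
    have hψd : HasFDerivAt ψ (fderiv ℝ ψ (γ t)) (γ t) :=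
      ((hψ.contDiffAt (hUψ.mem_nhds (hVsU (hγVs t)))).differentiableAt (by simp)).hasFDerivAt
    exact hψd.comp_hasDerivAt t (hγd t)
  have hder1 : deriv (ψ ∘ γ) = G := funext fun t => (hψγ t).deriv
  set S : CE K := deriv (deriv P) 0 with hSdef
  have hFd' : HasFDerivAt (fun y => fderiv ℝ ψ y) Hψ (γ 0) := hγ0.symm ▸ hFd
  have hc : HasDerivAt (fun t : ℝ => fderiv ℝ ψ (γ t)) (Hψ (a • v₀)) 0 :=
    hFd'.comp_hasDerivAt 0 hγv
  have hQdiff : HasDerivAt (deriv P) S 0 := ((hQan 0 h0D).differentiableAt).hasDerivAt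
  have hQdiff' : HasDerivAt (deriv P) S (η 0) := by rw [hη0]; exact hQdiff
  have hw : HasDerivAt (fun t : ℝ => deriv P (η t)) (a • S) 0 := by
    have h5 := HasDerivAt.scomp (0:ℝ) hQdiff' (hηd 0)
    have h6 : (deriv P ∘ η) = fun t => deriv P (η t) := rfl
    rw [h6] at h5
    simpa only [θf1_zero, Complex.ofReal_one, one_mul] using h5
  have hs : HasDerivAt (fun t : ℝ => (((θf1 δ t : ℝ):ℂ) * a)) 0 0 := by
    simpa using ((θf1_hasDeriv_zero δ).ofReal_comp).mul_const a
  have hu' : HasDerivAt (fun t : ℝ => ((((θf1 δ t : ℝ):ℂ) * a) • deriv P (η t)))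
      ((a*a) • S) 0 := by
    have := hs.smul hw
    exact this.congr_deriv (by simp [hη0, θf1_zero, smul_smul])
  have hG : HasDerivAt G (Hψ (a • v₀) (a • v₀) + fderiv ℝ ψ x ((a*a) • S)) 0 := by
    have := hc.clm_apply hu'
    simpa [hGdef, hγ0, hη0, hQ0, θf1_zero] using this
  have h2 : iteratedDeriv 2 (ψ ∘ γ) 0 = deriv (deriv (ψ ∘ γ)) 0 := by
    rw [show (2:ℕ) = 1 + 1 from rfl, iteratedDeriv_succ, iteratedDeriv_one]
  rw [← hBval, h2, hder1, hG.deriv]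

end AuxLemmas

set_option maxHeartbeats 1000000 in
/-- **Lemma (Morse indices of strictly plurisubharmonic functions).**
Let `ψ` be a strictly plurisubharmonic function on an almost complex manifold `(X,J)` of
real dimension `2n` (here presented in a chart, as an open subset of `ℝ^{2n}`), i.e.
`ω_ψ = -d(dψ ∘ J)` tames `J`.  Then every non-degenerate critical point of `ψ` has Morse
index at most `n`.  In particular, if `ψ` is an exhausting strictly plurisubharmonic Morse
function on a Stein manifold of complex dimension `n`, all its critical points have index at
most `n`. -/
theorem psh_morse_index_le (n : ℕ) :
    (∀ (Xo : Set (E (2*n))), IsOpen Xo →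
      ∀ (J : E (2*n) → E (2*n) →L[ℝ] E (2*n)) (ψ : E (2*n) → ℝ),
        ContDiffOn ℝ (⊤ : ℕ∞) J Xo → ContDiffOn ℝ (⊤ : ℕ∞) ψ Xo →
        (∀ x ∈ Xo, ∀ v : E (2*n), J x (J x v) = -v) →
        -- `ω_ψ = -d(dψ∘J)` tames `J`
        (∀ x ∈ Xo, ∀ v : E (2*n), v ≠ 0 →
          0 < extD (fun y => -((fderiv ℝ ψ y).comp (J y))) x v (J x v)) →
        ∀ x₀ ∈ Xo, fderiv ℝ ψ x₀ = 0 →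
        -- non-degenerate critical point
        (∀ v : E (2*n), v ≠ 0 → ∃ w, (fderiv ℝ (fun y => fderiv ℝ ψ y) x₀ v) w ≠ 0) →
        -- Morse index at most n
        ∀ L : Submodule ℝ (E (2*n)),
          (∀ v ∈ L, v ≠ 0 → (fderiv ℝ (fun y => fderiv ℝ ψ y) x₀ v) v < 0) →
          Module.finrank ℝ L ≤ n) ∧
    -- the Stein case
    (∀ (K : ℕ) (Vs : Set (CE K)) (ψ : CE K → ℝ),
      IsSteinManifold n Vs → IsStrictlyPSHOn K ψ Vs → IsExhaustingOn K ψ Vs →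
      IsMorseOn Vs ψ → ∀ x, IsCriticalOn Vs ψ x → HessianIndexLe Vs ψ x n) := by
  constructor
  · -- Part 1: almost complex chart case
    intro Xo hXo J ψ hJ hψ hJJ htame x₀ hx₀ hcrit _ L hLneg
    have hJJv : ∀ v : E (2*n), J x₀ (J x₀ v) = -v := hJJ x₀ hx₀
    have hJinj : Function.Injective (J x₀) := by
      have : Function.LeftInverse (fun v => -(J x₀ v)) (J x₀) := fun v => by
        simp [hJJv v]
      exact this.injective
    have hc : ∀ u : E (2*n), (fderiv ℝ ψ x₀).comp (fderiv ℝ J x₀ u) = 0 := by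
      intro u; rw [hcrit]; exact ContinuousLinearMap.zero_comp _
    have hpos : ∀ v : E (2*n), v ∈ (⊤ : Submodule ℝ (E (2*n))) → v ≠ 0 →
        0 < (fun v => fderiv ℝ (fun y => fderiv ℝ ψ y) x₀ v v) v
          + (fun v => fderiv ℝ (fun y => fderiv ℝ ψ y) x₀ v v) ((J x₀ : E (2*n) →ₗ[ℝ] E (2*n)) v) := by
      intro v _ hv
      have h1 := htame x₀ hx₀ v hv
      have h2 := aux_extD hXo hx₀ J ψ hJ hψ hc v (hJJv v)
      rw [h2] at h1
      simpa using h1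
    have hfin : Module.finrank ℝ (⊤ : Submodule ℝ (E (2*n))) ≤ 2 * n := by
      rw [finrank_top]
      simp [finrank_euclideanSpace_fin]
    exact aux_la (J x₀ : E (2*n) →ₗ[ℝ] E (2*n)) hJinj L ⊤ le_top (fun _ _ => trivial)
      (fun v => fderiv ℝ (fun y => fderiv ℝ ψ y) x₀ v v) hLneg hpos n hfin
  · -- Part 2: the Stein case
    intro K Vs ψ hStein hPSH _ _ x hcrit B hB L hLT hLneg
    obtain ⟨hVscl, hVsne, hsub⟩ := hStein
    have hxVs : x ∈ Vs := hcrit.1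
    obtain ⟨φ, ρ, O, U, hO, hU, hxU, hφ, hρ, hinj, hρφ, himg⟩ := hsub x hxVs
    obtain ⟨y₀, hy₀, hxy⟩ : ∃ y₀ ∈ O, φ y₀ = x := by
      have : x ∈ φ '' O := by rw [himg]; exact ⟨hxVs, hxU⟩
      obtain ⟨y₀, h1, h2⟩ := this; exact ⟨y₀, h1, h2⟩
    obtain ⟨⟨Uψ, hUψ, hVsUψ, hψsm⟩, htame⟩ := hPSH
    haveI : FiniteDimensional ℝ (CE K) := Module.Finite.trans (R := ℝ) ℂ (CE K)
    haveI : FiniteDimensional ℝ (CE n) := Module.Finite.trans (R := ℝ) ℂ (CE n)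
    set A : CE n →L[ℝ] CE K := (fderiv ℂ φ y₀).restrictScalars ℝ with hA
    have hAfd : HasFDerivAt φ A y₀ :=
      ((hφ.differentiableAt (hO.mem_nhds hy₀)).hasFDerivAt).restrictScalars ℝ
    have hAinj : Function.Injective A := hinj y₀ hy₀
    have himgVs : ∀ y ∈ O, φ y ∈ Vs := by
      intro y hy
      have : φ y ∈ Vs ∩ U := himg ▸ Set.mem_image_of_mem φ hy
      exact this.1
    -- tangent space is contained in the range of A
    have hconesub : tangentConeAt ℝ Vs x ⊆ Set.range A := by
      rw [← hxy]
      exact aux_cone_sub_range hO hU hy₀ (hxy ▸ hxU) hAfd hAinj hρ hρφ himg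
    have hTsub : TanSp Vs x ≤ LinearMap.range (A : CE n →ₗ[ℝ] CE K) := by
      rw [TanSp, Submodule.span_le]
      intro w hw
      obtain ⟨u, hu⟩ := hconesub hw
      exact ⟨u, hu⟩
    have hφOVs : φ '' O ⊆ Vs := by rintro w ⟨y, hy, rfl⟩; exact himgVs y hy
    have hrangeT : ∀ w : CE n, A w ∈ TanSp Vs x := by
      intro w
      apply Submodule.subset_span
      have := aux_range_sub_cone hO hy₀ hAfd hφOVs w
      rwa [hxy] at this
    have hmulI : ∀ w : CE K, mulI K w = Complex.I • w := by
      intro w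
      simp [mulI]
    -- J-invariance of the tangent space
    have hJT : ∀ v ∈ TanSp Vs x, ((mulI K : CE K →L[ℝ] CE K) : CE K →ₗ[ℝ] CE K) v ∈ TanSp Vs x := by
      intro v hv
      obtain ⟨u, hu⟩ := hTsub hv
      have h1 : ((mulI K : CE K →L[ℝ] CE K) : CE K →ₗ[ℝ] CE K) v = A (Complex.I • u) := by
        show mulI K v = A (Complex.I • u)
        rw [hmulI, ← hu]
        show Complex.I • (fderiv ℂ φ y₀ u) = fderiv ℂ φ y₀ (Complex.I • u)
        rw [_root_.map_smul]
      rw [h1]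
      exact hrangeT _
    have hmulIJJ : ∀ v : CE K, mulI K (mulI K v) = -v := by
      intro v
      rw [hmulI, hmulI, smul_smul, Complex.I_mul_I]
      simp
    have hmulIinj : Function.Injective (((mulI K : CE K →L[ℝ] CE K) : CE K →ₗ[ℝ] CE K)) := by
      have : Function.LeftInverse (fun v => -(mulI K v))
          (((mulI K : CE K →L[ℝ] CE K) : CE K →ₗ[ℝ] CE K)) := fun v => by
        show -(mulI K (mulI K v)) = v
        rw [hmulIJJ]; simp
      exact this.injective
    have hψxU : x ∈ Uψ := hVsUψ hxVs
    -- positivity of the taming form in terms of the ambient Hessian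
    have hHess : ∀ v ∈ TanSp Vs x, v ≠ 0 →
        0 < fderiv ℝ (fun y => fderiv ℝ ψ y) x v v
          + fderiv ℝ (fun y => fderiv ℝ ψ y) x (mulI K v) (mulI K v) := by
      intro v hv hv0
      have hc' : ∀ u : CE K, (fderiv ℝ ψ x).comp (fderiv ℝ (fun _ => mulI K) x u) = 0 := by
        intro u
        rw [fderiv_fun_const]
        simp
      have h2 := aux_extD hUψ hψxU (fun _ => mulI K) ψ contDiffOn_const hψsm hc' v (hmulIJJ v)
      have h1 := htame x hxVs v hv hv0
      have h3 : extD (steinForm K ψ) x v (mulI K v)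
          = extD (fun y => -((fderiv ℝ ψ y).comp ((fun _ => mulI K) y))) x v ((fun _ => mulI K) x v) := rfl
      rw [h3, h2] at h1
      exact h1
    -- positivity for the intrinsic Hessian B
    have hposB : ∀ v ∈ TanSp Vs x, v ≠ 0 → 0 < B v v + B (mulI K v) (mulI K v) := by
      intro v hv hv0
      obtain ⟨u, hu⟩ := hTsub hv
      have hu' : (fderiv ℂ φ y₀) u = v := hu
      have hB1 := aux_curve hUψ hVsUψ hψsm hO hy₀ hφ himgVs hxy B hB u 1 (by simp)
      have hB2 := aux_curve hUψ hVsUψ hψsm hO hy₀ hφ himgVs hxy B hB u Complex.I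
        (by simp)
      rw [hu'] at hB1 hB2
      have hIv : Complex.I • v = mulI K v := (hmulI v).symm
      rw [hIv] at hB2
      have h1s : (1:ℂ) • v = v := one_smul _ _
      rw [h1s] at hB1
      have hII : (Complex.I * Complex.I : ℂ) = -1 := Complex.I_mul_I
      rw [hII] at hB2
      have h11 : ((1:ℂ) * 1 : ℂ) = 1 := by norm_num
      rw [h11] at hB1
      set S := deriv (deriv (fun τ : ℂ => φ (y₀ + τ • u))) 0
      have hcancel : fderiv ℝ ψ x ((1:ℂ) • S) + fderiv ℝ ψ x ((-1:ℂ) • S) = 0 := by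
        have e1 : ((1:ℂ) • S) = S := one_smul _ _
        have e2 : ((-1:ℂ) • S) = -S := by
          rw [show ((-1:ℂ)) = -(1:ℂ) from rfl, neg_smul, one_smul]
        rw [e1, e2, map_neg]
        ring
      have hpos := hHess v hv hv0
      have := hB1
      have := hB2
      linarith [hB1, hB2, hcancel, hpos]
    -- finish with the linear algebra lemma
    have hfinT : Module.finrank ℝ (TanSp Vs x) ≤ 2 * n := by
      have h1 : Module.finrank ℝ (TanSp Vs x)
          ≤ Module.finrank ℝ (LinearMap.range (A : CE n →ₗ[ℝ] CE K)) :=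
        Submodule.finrank_mono hTsub
      have h2 : Module.finrank ℝ (LinearMap.range (A : CE n →ₗ[ℝ] CE K))
          ≤ Module.finrank ℝ (CE n) := LinearMap.finrank_range_le _
      have h3 : Module.finrank ℝ (CE n) = 2 * n := by
        have := Module.finrank_mul_finrank ℝ ℂ (CE n)
        rw [Complex.finrank_real_complex, finrank_euclideanSpace_fin] at this
        omega
      omega
    exact aux_la ((mulI K : CE K →L[ℝ] CE K) : CE K →ₗ[ℝ] CE K) hmulIinj L (TanSp Vs x)
      hLT hJT (fun v => B v v) hLneg hposB n hfinT
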